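/- For the two-server two-task-type system with deterministic unit arrivals at rates λ₁, λ₂ ∈ (0.5, 1] and swapped rate estimates (server 1 believed fast for type 2 and slow for type 1, and vice versa for server 2), the induced routing assigns type-1 tasks to server 2 at rate λ₁ > μ = 0.5 (the true service rate of type 1 at server 2), so the workload of server 2 grows without bound: W₂(t) ≥ (λ₁/0.5 − 1)·t − C for a constant C, hence the system is unstable although (λ₁, λ₂) lies in the capacity region. -/
import Mathlib

open Finset Filter

/-- Instability under misinitialized rates without exploration: if all type-1
tasks (arriving at long-run rate `λ₁ > 0.5`) are routed to server 2 whose true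
service rate for them is `0.5`, then server 2's workload grows linearly, i.e.
`W₂(t) ≥ (λ₁/0.5 − 1)·t − C` for some constant `C`, and `W₂(t) → ∞`. -/
theorem no_exploration_instability
    (lam₁ : ℝ) (hlam₁ : 1 / 2 < lam₁) (hlam₁' : lam₁ ≤ 1)
    (a : ℕ → ℝ) (ha : ∀ t, 0 ≤ a t)
    (harr : ∀ t : ℕ, lam₁ * t - 1 ≤ ∑ s ∈ Finset.range t, a s)
    (W : ℕ → ℝ) (hW0 : 0 ≤ W 0)
    (hdyn : ∀ t, W (t + 1) = max (W t + a t / (1 / 2) - 1) 0) :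
    (∃ C : ℝ, ∀ t : ℕ, (lam₁ / (1 / 2) - 1) * t - C ≤ W t) ∧
      Tendsto W atTop atTop := by
  have key : ∀ t : ℕ, W 0 + 2 * (∑ s ∈ Finset.range t, a s) - t ≤ W t := by
    intro t
    induction t with
    | zero => simp
    | succ n ih =>
      have h1 : W n + a n / (1 / 2) - 1 ≤ W (n + 1) := by
        rw [hdyn n]; exact le_max_left _ _
      have : a n / (1 / 2) = 2 * a n := by ring
      rw [this] at h1
      rw [Finset.sum_range_succ]
      push_cast
      linarith
  have hlin : ∀ t : ℕ, (lam₁ / (1 / 2) - 1) * t - 2 ≤ W t := by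
    intro t
    have h2 := harr t
    have h3 := key t
    have : lam₁ / (1 / 2) = 2 * lam₁ := by ring
    rw [this]
    nlinarith [h2, h3, hW0]
  refine ⟨⟨2, hlin⟩, ?_⟩
  have hpos : 0 < lam₁ / (1 / 2) - 1 := by
    have : lam₁ / (1 / 2) = 2 * lam₁ := by ring
    rw [this]; linarith
  have htend : Tendsto (fun t : ℕ => (lam₁ / (1 / 2) - 1) * t - 2) atTop atTop :=
    (tendsto_natCast_atTop_atTop.const_mul_atTop hpos).atTop_add tendsto_const_nhds
  exact tendsto_atTop_mono hlin htend
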